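/- arXiv:1903.00129 — 3 statements merged into one kernel-verified Lean document; each statement's English description precedes it below -/
import Mathlib

section
/- Let Θ be a finite set, π₀ a probability distribution on Θ with full support, and γ ∈ (0,1]. A probability distribution π on Θ satisfies π₀(E)·π(E') ≥ γ·π₀(E')·π(E) for all subsets E, E' ⊆ Θ if and only if there exists c > 0 such that γ·c ≤ π(θ)/π₀(θ) ≤ c for all θ ∈ Θ. -/
/-!
Take `c` to be the largest likelihood ratio `π θ / π₀ θ`; it is positive because `π` has mass.
The set condition for the singletons `{θmax}` and `{θ}` is exactly `γ * c ≤ π θ / π₀ θ`.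
Conversely, summing the pointwise bounds gives `π(E) ≤ c π₀(E)` and `γ c π₀(E') ≤ π(E')`,
which combine into the set condition.
-/

open Finset

section RatioBounds

variable {ι : Type*} {s : Finset ι} {f g : ι → ℝ} {c : ℝ}

theorem sum_le_mul_sum_of_forall_div_le (hg : ∀ i ∈ s, 0 < g i) (h : ∀ i ∈ s, f i / g i ≤ c) :
    ∑ i ∈ s, f i ≤ c * ∑ i ∈ s, g i := by
  rw [mul_sum]
  exact sum_le_sum fun i hi => (div_le_iff₀ (hg i hi)).mp (h i hi)

theorem mul_sum_le_sum_of_forall_le_div (hg : ∀ i ∈ s, 0 < g i) (h : ∀ i ∈ s, c ≤ f i / g i) :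
    c * ∑ i ∈ s, g i ≤ ∑ i ∈ s, f i := by
  rw [mul_sum]
  exact sum_le_sum fun i hi => (le_div_iff₀ (hg i hi)).mp (h i hi)

end RatioBounds

theorem mul_div_le_div_of_mul_le_mul {p₀ q₀ p q γ : ℝ} (hp₀ : 0 < p₀) (hq₀ : 0 < q₀)
    (h : p₀ * q ≥ γ * q₀ * p) : γ * (p / p₀) ≤ q / q₀ := by
  rw [← mul_div_assoc, div_le_div_iff₀ hp₀ hq₀]
  linarith

theorem stmt_0_general (Θ : Type*) [Fintype Θ]
    (π₀ π : Θ → ℝ) (γ : ℝ) (hγ : 0 < γ)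
    (hπ₀pos : ∀ θ, 0 < π₀ θ)
    (hπsum : ∑ θ, π θ = 1) :
    (∀ E E' : Finset Θ,
        (∑ θ ∈ E, π₀ θ) * (∑ θ ∈ E', π θ) ≥ γ * (∑ θ ∈ E', π₀ θ) * (∑ θ ∈ E, π θ))
    ↔ ∃ c > 0, ∀ θ, γ * c ≤ π θ / π₀ θ ∧ π θ / π₀ θ ≤ c := by
  constructor
  · intro h
    obtain ⟨θ₁, -, hθ₁⟩ : ∃ θ ∈ univ, (0 : ℝ) < π θ :=
      exists_lt_of_sum_lt (by simp [hπsum])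
    have : Nonempty Θ := ⟨θ₁⟩
    obtain ⟨θmax, -, hθmax⟩ := exists_max_image univ (fun θ => π θ / π₀ θ) univ_nonempty
    refine ⟨π θmax / π₀ θmax, (div_pos hθ₁ (hπ₀pos θ₁)).trans_le (hθmax θ₁ (mem_univ _)),
      fun θ => ⟨?_, hθmax θ (mem_univ _)⟩⟩
    exact mul_div_le_div_of_mul_le_mul (hπ₀pos θmax) (hπ₀pos θ) (by simpa using h {θmax} {θ})
  · rintro ⟨c, -, hbd⟩ E E'
    have hE := sum_le_mul_sum_of_forall_div_le (s := E) (fun θ _ => hπ₀pos θ) fun θ _ => (hbd θ).2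
    have hE' := mul_sum_le_sum_of_forall_le_div (s := E') (fun θ _ => hπ₀pos θ)
      fun θ _ => (hbd θ).1
    have hπ₀E : 0 ≤ ∑ θ ∈ E, π₀ θ := sum_nonneg fun θ _ => (hπ₀pos θ).le
    have hπ₀E' : 0 ≤ ∑ θ ∈ E', π₀ θ := sum_nonneg fun θ _ => (hπ₀pos θ).le
    calc γ * (∑ θ ∈ E', π₀ θ) * (∑ θ ∈ E, π θ)
        ≤ γ * (∑ θ ∈ E', π₀ θ) * (c * ∑ θ ∈ E, π₀ θ) := by gcongr
      _ = (∑ θ ∈ E, π₀ θ) * (γ * c * ∑ θ ∈ E', π₀ θ) := by ring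
      _ ≤ (∑ θ ∈ E, π₀ θ) * (∑ θ ∈ E', π θ) := by gcongr

theorem stmt_0 (Θ : Type*) [Fintype Θ] [Nonempty Θ]
    (π₀ π : Θ → ℝ) (γ : ℝ) (hγ : 0 < γ) (hγ1 : γ ≤ 1)
    (hπ₀pos : ∀ θ, 0 < π₀ θ) (hπ₀sum : ∑ θ, π₀ θ = 1)
    (hπnn : ∀ θ, 0 ≤ π θ) (hπsum : ∑ θ, π θ = 1) :
    (∀ E E' : Finset Θ,
        (∑ θ ∈ E, π₀ θ) * (∑ θ ∈ E', π θ) ≥ γ * (∑ θ ∈ E', π₀ θ) * (∑ θ ∈ E, π θ))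
    ↔ ∃ c > 0, ∀ θ, γ * c ≤ π θ / π₀ θ ∧ π θ / π₀ θ ≤ c :=
  stmt_0_general Θ π₀ π γ hγ hπ₀pos hπsum
end

section
/- For γ ∈ (0,1] and θ₁ ∈ (0,1), define f(θ₁) = (γ·θ₁² + 1 − θ₁²) / (2·(γ·θ₁ + 1 − θ₁)). Then f is maximized over (0,1) at θ₁ = 1/(1+√γ), and the maximum value equals 1/(1+√γ). -/
/-! Write `f = N / (2 D)` and `s = √γ`, so `γ = s²`. Then `2 D - (1 + s) N`
is `(1 - s) (1 - (1 + s) θ)²`, which is nonnegative for `s ≤ 1` and vanishes at `θ = 1 / (1 + s)`. -/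

/-- Mean of the density proportional to `γ` on `[0, θ)` and to `1` on `[θ, 1]`. -/
noncomputable def posteriorMean (γ θ : ℝ) : ℝ :=
  (γ * θ ^ 2 + 1 - θ ^ 2) / (2 * (γ * θ + 1 - θ))

lemma two_mul_denom_sub_mul_numer (s θ : ℝ) :
    2 * (s ^ 2 * θ + 1 - θ) - (1 + s) * (s ^ 2 * θ ^ 2 + 1 - θ ^ 2) =
      (1 - s) * (1 - (1 + s) * θ) ^ 2 := by
  ring

lemma posteriorMean_le {γ s θ : ℝ} (hγ : γ = s ^ 2) (hs0 : 0 ≤ s) (hs1 : s ≤ 1)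
    (hden : 0 < γ * θ + 1 - θ) : posteriorMean γ θ ≤ 1 / (1 + s) := by
  subst hγ
  rw [posteriorMean, div_le_div_iff₀ (by positivity) (by positivity)]
  nlinarith [two_mul_denom_sub_mul_numer s θ,
    mul_nonneg (sub_nonneg.mpr hs1) (sq_nonneg (1 - (1 + s) * θ))]

lemma posteriorMean_one_div_one_add {γ s : ℝ} (hγ : γ = s ^ 2) (hs : 0 < s) :
    posteriorMean γ (1 / (1 + s)) = 1 / (1 + s) := by
  subst hγ
  have h1s : 1 + s ≠ 0 := by positivity
  have hnum : s ^ 2 * (1 / (1 + s)) ^ 2 + 1 - (1 / (1 + s)) ^ 2 = 2 * s / (1 + s) := by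
    field_simp
    ring
  have hden : s ^ 2 * (1 / (1 + s)) + 1 - 1 / (1 + s) = s := by
    field_simp
    ring
  rw [posteriorMean, hnum, hden]
  field_simp

theorem stmt_11 (γ : ℝ) (hγ : γ ∈ Set.Ioc (0:ℝ) 1) :
    (∀ θ₁ ∈ Set.Ioo (0:ℝ) 1,
      (γ * θ₁ ^ 2 + 1 - θ₁ ^ 2) / (2 * (γ * θ₁ + 1 - θ₁)) ≤ 1 / (1 + Real.sqrt γ)) ∧
    (1 / (1 + Real.sqrt γ) ∈ Set.Ioo (0:ℝ) 1 →
      (γ * (1 / (1 + Real.sqrt γ)) ^ 2 + 1 - (1 / (1 + Real.sqrt γ)) ^ 2) /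
          (2 * (γ * (1 / (1 + Real.sqrt γ)) + 1 - 1 / (1 + Real.sqrt γ)))
        = 1 / (1 + Real.sqrt γ)) := by
  obtain ⟨hγ0, hγ1⟩ := hγ
  have hsq : γ = √γ ^ 2 := (Real.sq_sqrt hγ0.le).symm
  have hs1 : √γ ≤ 1 := Real.sqrt_le_one.mpr hγ1
  refine ⟨fun θ ⟨hθ0, hθ1⟩ => ?_, fun _ => ?_⟩
  · have hden : 0 < γ * θ + 1 - θ := by nlinarith
    exact posteriorMean_le hsq (Real.sqrt_nonneg γ) hs1 hden
  · exact posteriorMean_one_div_one_add hsq (Real.sqrt_pos.mpr hγ0)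
end

section
/- In the crowdfunding model, a receiver with wealth w > 0, CARA-type payoff −θ_π·e^{−(w+ρ·a)} − (1−θ_π)·e^{−(w−a)} replaced by the logarithmic specification θ_π·log(w+ρ·a) + (1−θ_π)·log(w−a), and expected success probability θ_π ∈ (1/(1+ρ), 1), has optimal pledge BR = (w/ρ)·(θ_π·(1+ρ) − 1) > 0; moreover BR = 0 whenever θ_π ≤ 1/(1+ρ). -/
/-! The objective `U a = θ log (w + ρ a) + (1 - θ) log (w - a)` is concave in the pledge `a`, so it
lies below each of its tangent lines: `U a ≤ U c + (a - c) U'(c)`. The candidate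
`a* = (w / ρ)(θ (1 + ρ) - 1)` is the critical point of `U`, hence a global maximiser; when
`θ (1 + ρ) ≤ 1` the marginal utility `U'(0) = (θ (1 + ρ) - 1) / w` is nonpositive, so no
nonnegative pledge beats `a = 0`. -/

open Real

lemma Real.log_le_log_add_sub_div {x c : ℝ} (hx : 0 < x) (hc : 0 < c) :
    log x ≤ log c + (x - c) / c := by
  have h := log_le_sub_one_of_pos (div_pos hx hc)
  rw [log_div hx.ne' hc.ne'] at h
  rw [sub_div, div_self hc.ne']
  linarith

namespace Pledge

variable (w ρ θ : ℝ)

noncomputable def utility (a : ℝ) : ℝ :=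
  θ * log (w + ρ * a) + (1 - θ) * log (w - a)

noncomputable def marginalUtility (c : ℝ) : ℝ :=
  θ * ρ / (w + ρ * c) - (1 - θ) / (w - c)

noncomputable def optimalPledge : ℝ :=
  (w / ρ) * (θ * (1 + ρ) - 1)

variable {w ρ θ}

lemma utility_le_add_mul_marginalUtility (hθ0 : 0 ≤ θ) (hθ1 : θ ≤ 1) {a c : ℝ}
    (ha₁ : 0 < w + ρ * a) (ha₂ : 0 < w - a) (hc₁ : 0 < w + ρ * c) (hc₂ : 0 < w - c) :
    utility w ρ θ a ≤ utility w ρ θ c + (a - c) * marginalUtility w ρ θ c := by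
  have h₁ := mul_le_mul_of_nonneg_left (log_le_log_add_sub_div ha₁ hc₁) hθ0
  have h₂ := mul_le_mul_of_nonneg_left (log_le_log_add_sub_div ha₂ hc₂) (sub_nonneg.2 hθ1)
  have hlin : θ * ((w + ρ * a - (w + ρ * c)) / (w + ρ * c))
      + (1 - θ) * ((w - a - (w - c)) / (w - c)) = (a - c) * marginalUtility w ρ θ c := by
    unfold marginalUtility
    field_simp
    ring
  unfold utility
  linarith

lemma marginalUtility_optimalPledge (hw : 0 < w) (hρ : 0 < ρ) (hθ0 : 0 < θ) (hθ1 : θ < 1) :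
    marginalUtility w ρ θ (optimalPledge w ρ θ) = 0 := by
  have h₁ : w + ρ * optimalPledge w ρ θ = w * θ * (1 + ρ) := by
    unfold optimalPledge; field_simp; ring
  have h₂ : w - optimalPledge w ρ θ = w * (1 + ρ) * (1 - θ) / ρ := by
    unfold optimalPledge; field_simp; ring
  have h1ρ : 1 + ρ ≠ 0 := by positivity
  have h1θ : 1 - θ ≠ 0 := by linarith
  rw [marginalUtility, h₁, h₂]
  field_simp
  ring

lemma marginalUtility_zero (hw : 0 < w) :
    marginalUtility w ρ θ 0 = (θ * (1 + ρ) - 1) / w := by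
  rw [marginalUtility, mul_zero, add_zero, sub_zero]
  field_simp
  ring

lemma optimalPledge_pos (hw : 0 < w) (hρ : 0 < ρ) (hθ : 1 < θ * (1 + ρ)) :
    0 < optimalPledge w ρ θ :=
  mul_pos (div_pos hw hρ) (sub_pos.2 hθ)

lemma optimalPledge_lt (hw : 0 < w) (hρ : 0 < ρ) (hθ1 : θ < 1) :
    optimalPledge w ρ θ < w := by
  rw [optimalPledge, div_mul_eq_mul_div, div_lt_iff₀ hρ]
  nlinarith [mul_lt_mul_of_pos_left hθ1 (mul_pos hw (by linarith : (0:ℝ) < 1 + ρ))]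

lemma utility_le_of_mem_Ico (hw : 0 < w) (hρ : 0 < ρ) (hθ0 : 0 ≤ θ) (hθ1 : θ ≤ 1) {a c : ℝ}
    (ha : a ∈ Set.Ico 0 w) (hc : c ∈ Set.Ico 0 w) (hmarg : (a - c) * marginalUtility w ρ θ c ≤ 0) :
    utility w ρ θ a ≤ utility w ρ θ c := by
  have hpos {x : ℝ} (hx : x ∈ Set.Ico 0 w) : 0 < w + ρ * x := by nlinarith [hx.1]
  have h := utility_le_add_mul_marginalUtility hθ0 hθ1 (hpos ha) (sub_pos.2 ha.2) (hpos hc)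
    (sub_pos.2 hc.2)
  linarith

end Pledge

open Pledge in
theorem stmt_16 (w ρ θπ : ℝ) (hw : 0 < w) (hρ : 0 < ρ) (hθ1 : θπ < 1) (hθ0 : 0 ≤ θπ) :
    (θπ ∈ Set.Ioo (1 / (1 + ρ)) 1 →
      (0 < (w / ρ) * (θπ * (1 + ρ) - 1) ∧
        (w / ρ) * (θπ * (1 + ρ) - 1) ∈ Set.Ico (0:ℝ) w ∧
        ∀ a ∈ Set.Ico (0:ℝ) w,
          θπ * Real.log (w + ρ * a) + (1 - θπ) * Real.log (w - a) ≤
            θπ * Real.log (w + ρ * ((w / ρ) * (θπ * (1 + ρ) - 1))) +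
              (1 - θπ) * Real.log (w - (w / ρ) * (θπ * (1 + ρ) - 1)))) ∧
    (θπ ≤ 1 / (1 + ρ) →
      ∀ a ∈ Set.Ico (0:ℝ) w,
        θπ * Real.log (w + ρ * a) + (1 - θπ) * Real.log (w - a) ≤
          θπ * Real.log (w + ρ * 0) + (1 - θπ) * Real.log (w - 0)) := by
  change (_ → 0 < optimalPledge w ρ θπ ∧ optimalPledge w ρ θπ ∈ Set.Ico 0 w ∧
      ∀ a ∈ Set.Ico 0 w, utility w ρ θπ a ≤ utility w ρ θπ (optimalPledge w ρ θπ)) ∧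
    (_ → ∀ a ∈ Set.Ico 0 w, utility w ρ θπ a ≤ utility w ρ θπ 0)
  have h1ρ : (0:ℝ) < 1 + ρ := by linarith
  constructor
  · rintro ⟨hθlo, -⟩
    have hθρ : 1 < θπ * (1 + ρ) := (div_lt_iff₀ h1ρ).1 hθlo
    have hθpos : 0 < θπ := by nlinarith
    have hpos := optimalPledge_pos hw hρ hθρ
    have hmem : optimalPledge w ρ θπ ∈ Set.Ico 0 w := ⟨hpos.le, optimalPledge_lt hw hρ hθ1⟩
    refine ⟨hpos, hmem, fun a ha => utility_le_of_mem_Ico hw hρ hθ0 hθ1.le ha hmem ?_⟩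
    rw [marginalUtility_optimalPledge hw hρ hθpos hθ1, mul_zero]
  · intro hθle a ha
    have hθρ : θπ * (1 + ρ) ≤ 1 := (le_div_iff₀ h1ρ).1 hθle
    refine utility_le_of_mem_Ico hw hρ hθ0 hθ1.le ha ⟨le_rfl, hw⟩ ?_
    rw [marginalUtility_zero hw, sub_zero]
    exact mul_nonpos_of_nonneg_of_nonpos ha.1 (div_nonpos_of_nonpos_of_nonneg (by linarith) hw.le)
end
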